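/- arXiv:2103.10508 — 4 statements merged into one kernel-verified Lean document; each statement's English description precedes it below -/
import Mathlib

section
/- Fix a > 0. Let (E_j)_{j≥1} be i.i.d. exponential random variables with mean 1 and set S_i = Σ_{j=1}^i E_j/(2 + j·a). Then almost surely there exists i_0 ≥ 2 such that S_i ≥ (1/(2a))·log i for all i ≥ i_0. -/
/-!
Split the indices into dyadic blocks `(2^k, 2^(k+1)]`. The mgf of `Exp(1)` at `-1/4` is `4/5`, so by
a Chernoff bound the block sum `∑ E_j` falls below `(3/4) 2^k` with probability at most
`(e^(3/16) · 4/5)^(2^k)`, which is summable; by Borel–Cantelli, almost surely every late block sum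
exceeds `(3/4) 2^k`. The weights on block `k` are at least `1/(2 + 2^(k+1) a)`, so once `2^k a ≥ 20`
each block contributes at least `(5/7)/(2a)` to `S_i`. Below `i` there are about `log₂ i` blocks, and
`5/7 > log 2`, so eventually `S_i ≥ log i / (2a)`.
-/

open MeasureTheory ProbabilityTheory Filter Real

/-- `X` is an exponential random variable with rate `r` under `μ`. -/
def IsExpRV {Ω : Type*} [MeasurableSpace Ω] (μ : Measure Ω) (r : ℝ) (X : Ω → ℝ) : Prop :=
  Measurable X ∧ ∀ t : ℝ, 0 ≤ t → μ {ω | X ω > t} = ENNReal.ofReal (Real.exp (-(r * t)))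

namespace IsExpRV

variable {Ω : Type*} [MeasurableSpace Ω] {μ : Measure Ω} [IsProbabilityMeasure μ]
  {r : ℝ} {X : Ω → ℝ}

lemma ae_pos (h : IsExpRV μ r X) : ∀ᵐ ω ∂μ, 0 < X ω :=
  (ae_iff_measure_eq (measurableSet_lt measurable_const h.1).nullMeasurableSet).2 <| by
    simpa using h.2 0 le_rfl

lemma integral_one_sub_exp_neg_mul (h : IsExpRV μ r X) (hr : 0 < r) {s : ℝ} (hs : 0 ≤ s) :
    ∫ ω, (1 - exp (-(s * X ω))) ∂μ = s / (r + s) := by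
  have hXm : Measurable X := h.1
  have hX : 0 ≤ᵐ[μ] X := h.ae_pos.mono fun _ => le_of_lt
  have hg : Continuous fun t => s * exp (-(s * t)) := by fun_prop
  have hG : ∀ x, ∫ t in (0)..x, s * exp (-(s * t)) = 1 - exp (-(s * x)) := by
    intro x
    rw [intervalIntegral.integral_eq_sub_of_hasDerivAt (fun t _ => hasDerivAt_neg_exp_mul_exp)
      (hg.intervalIntegrable _ _), mul_zero, neg_zero, exp_zero]
    ring
  -- layer cake for `G x = 1 - exp (-s x) = ∫ t in 0..x, s exp (-s t)` against the tail `exp (-r t)`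
  have hlayer := lintegral_comp_eq_lintegral_meas_lt_mul μ hX hXm.aemeasurable
    (fun t _ => hg.intervalIntegrable 0 t) (ae_of_all _ fun t => by positivity)
  simp only [hG] at hlayer
  have htail : ∫⁻ t in Set.Ioi 0, μ {ω | t < X ω} * ENNReal.ofReal (s * exp (-(s * t)))
      = ∫⁻ t in Set.Ioi 0, ENNReal.ofReal (s * exp (-(r + s) * t)) := by
    refine setLIntegral_congr_fun measurableSet_Ioi fun t ht => ?_
    rw [show {ω | t < X ω} = {ω | X ω > t} from rfl, h.2 t (le_of_lt ht),
      ← ENNReal.ofReal_mul (exp_pos _).le, ← mul_assoc, mul_comm _ s, mul_assoc, ← exp_add]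
    ring_nf
  have hint : IntegrableOn (fun t => s * exp (-(r + s) * t)) (Set.Ioi 0) :=
    (integrableOn_exp_mul_Ioi (by linarith) 0).const_mul s
  have hnn : 0 ≤ᵐ[μ] fun ω => 1 - exp (-(s * X ω)) := by
    filter_upwards [hX] with ω hω
    simpa using mul_nonneg hs hω
  have hrs : 0 < r + s := by linarith
  rw [integral_eq_lintegral_of_nonneg_ae hnn (by fun_prop : Measurable _).aestronglyMeasurable,
    hlayer, htail, ← ofReal_integral_eq_lintegral_ofReal hint (ae_of_all _ fun t => by positivity),
    integral_const_mul, integral_exp_mul_Ioi (by linarith), mul_zero, exp_zero, neg_div_neg_eq,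
    ENNReal.toReal_ofReal (by positivity)]
  ring

lemma mgf_neg (h : IsExpRV μ r X) (hr : 0 < r) {s : ℝ} (hs : 0 ≤ s) :
    mgf X μ (-s) = r / (r + s) := by
  have hX := h.1
  have hrs : r + s ≠ 0 := by positivity
  have hint : Integrable (fun ω => exp (-s * X ω)) μ := by
    refine .of_bound (by fun_prop : Measurable fun ω => exp (-s * X ω)).aestronglyMeasurable 1 ?_
    filter_upwards [h.ae_pos] with ω hω
    rw [norm_of_nonneg (exp_pos _).le, exp_le_one_iff]
    nlinarith
  have key := h.integral_one_sub_exp_neg_mul hr hs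
  simp only [← neg_mul] at key
  rw [integral_sub (integrable_const 1) hint, integral_const, probReal_univ, one_smul] at key
  rw [mgf, show r / (r + s) = 1 - s / (r + s) by field_simp; ring, ← key]
  ring

end IsExpRV

namespace ProbabilityTheory.iIndepFun

variable {Ω ι : Type*} [MeasurableSpace Ω] {μ : Measure Ω} [IsProbabilityMeasure μ]
  {r : ℝ} {E : ι → Ω → ℝ}

lemma measureReal_sum_le_le_of_isExpRV (hindep : iIndepFun E μ) (hexp : ∀ j, IsExpRV μ r (E j))
    (hr : 0 < r) {s : ℝ} (hs : 0 ≤ s) (J : Finset ι) (x : ℝ) :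
    μ.real {ω | ∑ j ∈ J, E j ω ≤ x} ≤ exp (s * x) * (r / (r + s)) ^ J.card := by
  have hmgf : mgf (∑ j ∈ J, E j) μ (-s) = (r / (r + s)) ^ J.card := by
    rw [hindep.mgf_sum fun j => (hexp j).1, Finset.prod_congr rfl fun j _ => (hexp j).mgf_neg hr hs,
      Finset.prod_const]
  have hint : Integrable (fun ω => exp (-s * (∑ j ∈ J, E j) ω)) μ :=
    mgf_pos_iff.1 (by rw [hmgf]; positivity)
  simpa [hmgf, Finset.sum_apply] using measure_le_le_exp_mul_mgf x (neg_nonpos.2 hs) hint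

end ProbabilityTheory.iIndepFun

def dyadicBlock (k : ℕ) : Finset ℕ := Finset.Ioc (2 ^ k) (2 ^ (k + 1))

lemma card_dyadicBlock (k : ℕ) : (dyadicBlock k).card = 2 ^ k := by
  rw [dyadicBlock, Nat.card_Ioc, pow_succ]
  omega

lemma sum_Ico_sum_dyadicBlock {M : Type*} [AddCommMonoid M] (f : ℕ → M) {K m : ℕ} (h : K ≤ m) :
    ∑ k ∈ Finset.Ico K m, ∑ j ∈ dyadicBlock k, f j = ∑ j ∈ Finset.Ioc (2 ^ K) (2 ^ m), f j := by
  induction m, h using Nat.le_induction with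
  | base => simp
  | succ m hKm ih =>
    rw [Finset.sum_Ico_succ_top hKm, ih, dyadicBlock,
      Finset.sum_Ioc_consecutive f (Nat.pow_le_pow_right two_pos hKm)
        (Nat.pow_le_pow_right two_pos m.le_succ)]

lemma summable_pow_two_pow {q : ℝ} (hq0 : 0 ≤ q) (hq1 : q < 1) :
    Summable fun k : ℕ => q ^ 2 ^ k :=
  (summable_geometric_of_lt_one hq0 hq1).of_nonneg_of_le (fun k => by positivity)
    fun k => pow_le_pow_of_le_one hq0 hq1.le (Nat.lt_two_pow_self (n := k)).le

lemma ae_eventually_lt_sum_dyadicBlock {Ω : Type*} [MeasurableSpace Ω] {μ : Measure Ω}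
    [IsProbabilityMeasure μ] {E : ℕ → Ω → ℝ} (hindep : iIndepFun E μ)
    (hexp : ∀ j, IsExpRV μ 1 (E j)) :
    ∀ᵐ ω ∂μ, ∀ᶠ k in atTop, 3 / 4 * 2 ^ k < ∑ j ∈ dyadicBlock k, E j ω := by
  have hq1 : exp (3 / 16) * (4 / 5) < 1 := by
    have := exp_bound_div_one_sub_of_interval (x := 3 / 16) (by norm_num) (by norm_num)
    norm_num at this
    linarith
  set q := exp (3 / 16) * (4 / 5) with hq
  have hbound : ∀ k, μ {ω | ∑ j ∈ dyadicBlock k, E j ω ≤ 3 / 4 * 2 ^ k} ≤ .ofReal (q ^ 2 ^ k) := by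
    intro k
    rw [← ofReal_measureReal]
    refine ENNReal.ofReal_le_ofReal ((hindep.measureReal_sum_le_le_of_isExpRV hexp one_pos
      (s := 1 / 4) (by norm_num) _ _).trans_eq ?_)
    rw [card_dyadicBlock, hq, mul_pow, ← exp_nat_mul]
    congr 2
    · push_cast
      ring
    · norm_num
  have hsum : ∑' k, μ {ω | ∑ j ∈ dyadicBlock k, E j ω ≤ 3 / 4 * 2 ^ k} ≠ ⊤ :=
    ne_top_of_le_ne_top (summable_pow_two_pow (by positivity) hq1).tsum_ofReal_ne_top
      (ENNReal.tsum_le_tsum hbound)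
  filter_upwards [ae_eventually_notMem hsum] with ω hω
  simpa using hω

lemma le_sum_dyadicBlock_div {x : ℕ → ℝ} (hx : ∀ j, 0 ≤ x j) {a : ℝ} (ha : 0 < a) {k : ℕ}
    (hk : 20 ≤ 2 ^ k * a) (hsum : 3 / 4 * 2 ^ k ≤ ∑ j ∈ dyadicBlock k, x j) :
    5 / 7 * (1 / (2 * a)) ≤ ∑ j ∈ dyadicBlock k, x j / (2 + j * a) := by
  calc 5 / 7 * (1 / (2 * a)) ≤ 3 / 4 * 2 ^ k / (2 + 2 ^ (k + 1) * a) := by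
        rw [pow_succ, mul_one_div, div_le_div_iff₀ (by positivity) (by positivity)]
        nlinarith
    _ ≤ ∑ j ∈ dyadicBlock k, x j / (2 + 2 ^ (k + 1) * a) := by
        rw [← Finset.sum_div]
        gcongr
    _ ≤ ∑ j ∈ dyadicBlock k, x j / (2 + j * a) := by
        refine Finset.sum_le_sum fun j hj => ?_
        have hj : (j : ℝ) ≤ 2 ^ (k + 1) := by exact_mod_cast (Finset.mem_Ioc.1 hj).2
        gcongr
        exact hx j

lemma eventually_mul_log_le_sum_Icc {f : ℕ → ℝ} (hf : ∀ j, 0 ≤ f j) {b δ : ℝ} (hb : 0 ≤ b)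
    (hδ : b * log 2 < δ) (hblock : ∀ᶠ k in atTop, δ ≤ ∑ j ∈ dyadicBlock k, f j) :
    ∀ᶠ i : ℕ in atTop, b * log i ≤ ∑ j ∈ Finset.Icc 1 i, f j := by
  obtain ⟨K, hK⟩ := eventually_atTop.1 hblock
  obtain ⟨M, hM⟩ := exists_nat_gt ((K * δ + b * log 2) / (δ - b * log 2))
  rw [div_lt_iff₀ (by linarith)] at hM
  filter_upwards [eventually_ge_atTop (2 ^ (M + K))] with i hi
  have hi0 : i ≠ 0 := (Nat.two_pow_pos _).trans_le hi |>.ne'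
  set m := Nat.log 2 i
  have hMm : M + K ≤ m := Nat.le_log_of_pow_le one_lt_two hi
  have hlog : log i ≤ (m + 1) * log 2 := by
    rw [← Nat.cast_succ, ← log_pow]
    exact log_le_log (by positivity) (by exact_mod_cast (Nat.lt_pow_succ_log_self one_lt_two i).le)
  have hMm' : (M : ℝ) ≤ m := by exact_mod_cast (Nat.le_add_right M K).trans hMm
  have hgap : K * δ + b * log 2 ≤ m * (δ - b * log 2) :=
    hM.le.trans (mul_le_mul_of_nonneg_right hMm' (by linarith))
  calc b * log i ≤ b * ((m + 1) * log 2) := by gcongr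
    _ ≤ (m - K) * δ := by linarith
    _ = ∑ k ∈ Finset.Ico K m, δ := by simp [Nat.cast_sub (show K ≤ m by omega)]
    _ ≤ ∑ k ∈ Finset.Ico K m, ∑ j ∈ dyadicBlock k, f j :=
        Finset.sum_le_sum fun k hk => hK k (Finset.mem_Ico.1 hk).1
    _ = ∑ j ∈ Finset.Ioc (2 ^ K) (2 ^ m), f j := sum_Ico_sum_dyadicBlock f (by omega)
    _ ≤ ∑ j ∈ Finset.Icc 1 i, f j := by
        refine Finset.sum_le_sum_of_subset_of_nonneg (fun j hj => ?_) fun j _ _ => hf j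
        have : 2 ^ m ≤ i := Nat.pow_log_le_self 2 hi0
        have := Nat.one_le_two_pow (n := K)
        simp only [Finset.mem_Ioc, Finset.mem_Icc] at hj ⊢
        omega

theorem atlas_stationary_positions_grow_log
    {Ω : Type*} [MeasurableSpace Ω] (μ : Measure Ω) [IsProbabilityMeasure μ]
    (a : ℝ) (ha : 0 < a)
    (E : ℕ → Ω → ℝ)
    (hindep : iIndepFun E μ)
    (hexp : ∀ j, IsExpRV μ 1 (E j)) :
    ∀ᵐ ω ∂μ, ∃ i₀ : ℕ, 2 ≤ i₀ ∧ ∀ i ≥ i₀,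
      (1 / (2*a)) * Real.log i ≤ ∑ j ∈ Finset.Icc 1 i, E j ω / (2 + j * a) := by
  have hpos : ∀ᵐ ω ∂μ, ∀ j, 0 < E j ω := ae_all_iff.2 fun j => (hexp j).ae_pos
  have hlarge : ∀ᶠ k in atTop, (20 : ℝ) ≤ 2 ^ k * a :=
    ((tendsto_pow_atTop_atTop_of_one_lt one_lt_two).atTop_mul_const ha).eventually_ge_atTop 20
  have hδ : 1 / (2 * a) * log 2 < 5 / 7 * (1 / (2 * a)) := by
    rw [mul_comm]
    exact mul_lt_mul_of_pos_right (log_two_lt_d9.trans (by norm_num)) (by positivity)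
  filter_upwards [hpos, ae_eventually_lt_sum_dyadicBlock hindep hexp] with ω hω hblock
  have hblock' : ∀ᶠ k in atTop, 5 / 7 * (1 / (2 * a)) ≤ ∑ j ∈ dyadicBlock k, E j ω / (2 + j * a) :=
    (hblock.and hlarge).mono fun k hk => le_sum_dyadicBlock_div (fun j => (hω j).le) ha hk.2 hk.1.le
  have hlog := eventually_mul_log_le_sum_Icc (fun j => div_nonneg (hω j).le (by positivity))
    (by positivity) hδ hblock'
  obtain ⟨i₀, hi₀⟩ := eventually_atTop.1 hlog
  exact ⟨max 2 i₀, le_max_left _ _, fun i hi => hi₀ i (le_of_max_le_right hi)⟩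
end

section
/- Let (Θ_i)_{i≥1} be i.i.d. nonnegative random variables with P(Θ_1 > 0) > 0, and let (λ_i)_{i≥1} be positive reals with limsup_i λ_i < ∞ and liminf_{d→∞} (1/(√d·log d))·Σ_{i=1}^d λ_i = ∞. Set U_i = λ_i Θ_i. Then almost surely liminf_{d→∞} (1/(√d·log d))·Σ_{i=1}^d min(U_i, 1/2) = ∞. -/
open MeasureTheory ProbabilityTheory Filter Real
open scoped NNReal

/-!
Write `Y i = min (Θ i) (1/2)`, `m = 𝔼[Y 1] > 0` and `M ≥ 1` for a bound on the `λ i`. The variables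
`λ i * Y i` are independent with values in `[0, M/2]`, so by Hoeffding's inequality the probability
that `∑_{i ≤ d} λ i (m - Y i) ≥ √d log d` is at most `exp (-8 (log d)² / M²)`, which is summable in
`d`. By Borel–Cantelli, almost surely `∑_{i ≤ d} λ i Y i > m ∑_{i ≤ d} λ i - √d log d` for all large
`d`, and `λ i Y i ≤ M min (λ i Θ i) (1/2)` turns this into the claimed growth.
-/

lemma summable_exp_neg_log_sq_div {a : ℝ} (ha : 0 < a) :
    Summable fun n : ℕ ↦ exp (-log n ^ 2 / a) := by
  refine Summable.of_norm_bounded_eventually_nat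
    (Real.summable_one_div_nat_pow.mpr one_lt_two) ?_
  have hlog : Tendsto (fun n : ℕ ↦ log n) atTop atTop :=
    tendsto_log_atTop.comp tendsto_natCast_atTop_atTop
  filter_upwards [hlog.eventually_ge_atTop (2 * a), eventually_gt_atTop 0] with n hn hn_pos
  have hn0 : (0 : ℝ) < n := by exact_mod_cast hn_pos
  calc ‖exp (-log n ^ 2 / a)‖ = exp (-log n ^ 2 / a) := by simp
    _ ≤ exp (-(2 * log n)) := by
      gcongr
      rw [neg_div, neg_le_neg_iff, le_div_iff₀ ha]
      nlinarith
    _ = 1 / (n : ℝ) ^ 2 := by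
      rw [exp_neg, two_mul, exp_add, exp_log hn0]
      ring

lemma ae_eventually_notMem_of_summable_measureReal {α : Type*} [MeasurableSpace α]
    {μ : Measure α} [IsFiniteMeasure μ] {s : ℕ → Set α} (hs : Summable fun n ↦ μ.real (s n)) :
    ∀ᵐ x ∂μ, ∀ᶠ n in atTop, x ∉ s n := by
  refine ae_eventually_notMem ?_
  simp_rw [← ofReal_measureReal (measure_ne_top μ _)]
  rw [← ENNReal.ofReal_tsum_of_nonneg (fun _ ↦ measureReal_nonneg) hs]
  exact ENNReal.ofReal_ne_top

section Deviations

variable {Ω : Type*} [MeasurableSpace Ω] {μ : Measure Ω} {X : ℕ → Ω → ℝ}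

lemma ae_eventually_sum_lt_sqrt_mul_log_of_hasSubgaussianMGF {c : ℝ≥0} (hc : 0 < c)
    (h_indep : iIndepFun X μ) (h_subG : ∀ i, HasSubgaussianMGF (X i) c μ) :
    ∀ᵐ ω ∂μ, ∀ᶠ d : ℕ in atTop, ∑ i ∈ Finset.Icc 1 d, X i ω < √d * log d := by
  have tail (d : ℕ) : μ.real {ω | √d * log d ≤ ∑ i ∈ Finset.Icc 1 d, X i ω}
      ≤ exp (-log d ^ 2 / (2 * c)) := by
    refine (HasSubgaussianMGF.measure_sum_ge_le_of_iIndepFun h_indep (fun i _ ↦ h_subG i)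
      (by positivity)).trans_eq ?_
    rcases d.eq_zero_or_pos with rfl | hd
    · simp
    · have hd : (0 : ℝ) < d := by exact_mod_cast hd
      rw [Finset.sum_const, Nat.card_Icc, mul_pow, sq_sqrt hd.le]
      congr 1
      field_simp
      push_cast
      ring
  have : IsFiniteMeasure μ := by
    simpa [integrable_const_iff] using (h_subG 0).integrable_exp_mul 0
  filter_upwards [ae_eventually_notMem_of_summable_measureReal <|
    (summable_exp_neg_log_sq_div (by positivity)).of_nonneg_of_le
      (fun _ ↦ measureReal_nonneg) tail] with ω hω
  filter_upwards [hω] with d hd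
  simpa using hd

lemma ae_eventually_sum_integral_sub_lt_sqrt_mul_log [IsProbabilityMeasure μ] {a b : ℝ}
    (hab : a < b) (h_indep : iIndepFun X μ) (hX : ∀ i, AEMeasurable (X i) μ)
    (hbd : ∀ i, ∀ᵐ ω ∂μ, X i ω ∈ Set.Icc a b) :
    ∀ᵐ ω ∂μ, ∀ᶠ d : ℕ in atTop, ∑ i ∈ Finset.Icc 1 d, (μ[X i] - X i ω) < √d * log d := by
  refine ae_eventually_sum_lt_sqrt_mul_log_of_hasSubgaussianMGF (c := (‖b - a‖₊ / 2) ^ 2)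
    ?_ ?_ fun i ↦ ?_
  · have : ‖b - a‖₊ ≠ 0 := by simpa [sub_eq_zero] using hab.ne'
    positivity
  · exact h_indep.comp (fun i x ↦ μ[X i] - x) fun i ↦ by fun_prop
  · exact (hasSubgaussianMGF_of_mem_Icc (hX i) (hbd i)).neg.congr
      (ae_of_all _ fun ω ↦ by simp)

end Deviations

lemma integral_min_const_pos {Ω : Type*} [MeasurableSpace Ω] {μ : Measure Ω}
    [IsFiniteMeasure μ] {Z : Ω → ℝ} (hZ : AEMeasurable Z μ) (h_nonneg : ∀ᵐ ω ∂μ, 0 ≤ Z ω)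
    (hpos : 0 < μ {ω | 0 < Z ω}) {h : ℝ} (hh : 0 < h) :
    0 < μ[fun ω ↦ min (Z ω) h] := by
  have h_mem : ∀ᵐ ω ∂μ, min (Z ω) h ∈ Set.Icc 0 h := by
    filter_upwards [h_nonneg] with ω hω
    exact ⟨le_min hω hh.le, min_le_right _ _⟩
  refine (integral_pos_iff_support_of_nonneg_ae (h_mem.mono fun _ hω ↦ hω.1)
    (Integrable.of_mem_Icc 0 h (by fun_prop) h_mem)).mpr (hpos.trans_le (measure_mono ?_))
  intro ω hω
  exact (lt_min hω hh).ne'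

lemma ae_eventually_integral_mul_sum_sub_lt_sum_mul_min {Ω : Type*} [MeasurableSpace Ω]
    {μ : Measure Ω} [IsProbabilityMeasure μ] {Θ : ℕ → Ω → ℝ} (hmeas : ∀ i, Measurable (Θ i))
    (hindep : iIndepFun Θ μ) (hident : ∀ i, IdentDistrib (Θ i) (Θ 1) μ μ)
    (hnn : ∀ i, ∀ᵐ ω ∂μ, 0 ≤ Θ i ω) {lam : ℕ → ℝ} {M h : ℝ} (hM : 0 < M) (hh : 0 < h)
    (hlam : ∀ i, 0 ≤ lam i) (hlamM : ∀ i, lam i ≤ M) :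
    ∀ᵐ ω ∂μ, ∀ᶠ d : ℕ in atTop, μ[fun ω ↦ min (Θ 1 ω) h] * ∑ i ∈ Finset.Icc 1 d, lam i
      - √d * log d < ∑ i ∈ Finset.Icc 1 d, lam i * min (Θ i ω) h := by
  set X : ℕ → Ω → ℝ := fun i ω ↦ lam i * min (Θ i ω) h
  have hX_indep : iIndepFun X μ := hindep.comp (fun i x ↦ lam i * min x h) fun i ↦ by fun_prop
  have hX_mean (i : ℕ) : μ[X i] = lam i * μ[fun ω ↦ min (Θ 1 ω) h] := by
    rw [integral_const_mul]
    exact congrArg _ ((hident i).comp (u := fun x ↦ min x h) (by fun_prop)).integral_eq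
  have hX_mem (i : ℕ) : ∀ᵐ ω ∂μ, X i ω ∈ Set.Icc 0 (M * h) := by
    filter_upwards [hnn i] with ω hω
    have h_nonneg : 0 ≤ min (Θ i ω) h := le_min hω hh.le
    exact ⟨mul_nonneg (hlam i) h_nonneg,
      mul_le_mul (hlamM i) (min_le_right _ _) h_nonneg hM.le⟩
  filter_upwards [ae_eventually_sum_integral_sub_lt_sqrt_mul_log (by positivity) hX_indep
    (fun i ↦ by fun_prop) hX_mem] with ω hω
  filter_upwards [hω] with d hd
  rw [Finset.sum_sub_distrib] at hd
  simp only [hX_mean, ← Finset.sum_mul] at hd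
  linarith

lemma mul_min_le_mul_min {l M θ h : ℝ} (hl : 0 ≤ l) (hlM : l ≤ M) (hM : 1 ≤ M) (hθ : 0 ≤ θ)
    (hh : 0 ≤ h) : l * min θ h ≤ M * min (l * θ) h := by
  rw [mul_min_of_nonneg _ _ hl, mul_min_of_nonneg _ _ (zero_le_one.trans hM)]
  have : 0 ≤ l * θ := mul_nonneg hl hθ
  exact min_le_min (by nlinarith) (by nlinarith)

lemma Filter.Tendsto.atTop_of_const_mul_sub_le {ι : Type*} {l : Filter ι} {s a b : ι → ℝ}
    {m M : ℝ} (ha : Tendsto (fun d ↦ 1 / s d * a d) l atTop) (hm : 0 < m) (hM : 0 < M)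
    (hs : ∀ᶠ d in l, 0 < s d) (hle : ∀ᶠ d in l, m * a d - s d ≤ M * b d) :
    Tendsto (fun d ↦ 1 / s d * b d) l atTop := by
  refine tendsto_atTop_mono' l ?_ <| Tendsto.const_mul_atTop (inv_pos.mpr hM) <|
    tendsto_atTop_add_const_right l (-1) (ha.const_mul_atTop hm)
  filter_upwards [hs, hle] with d hsd hd
  calc M⁻¹ * (m * (1 / s d * a d) + -1) = (m * a d - s d) / (M * s d) := by field_simp; ring
    _ ≤ M * b d / (M * s d) := by gcongr
    _ = 1 / s d * b d := by field_simp

theorem truncated_sums_grow_of_iid_scaled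
    {Ω : Type*} [MeasurableSpace Ω] (μ : Measure Ω) [IsProbabilityMeasure μ]
    (Θ : ℕ → Ω → ℝ)
    (hmeas : ∀ i, Measurable (Θ i))
    (hindep : iIndepFun Θ μ)
    (hident : ∀ i, IdentDistrib (Θ i) (Θ 1) μ μ)
    (hnn : ∀ i, ∀ᵐ ω ∂μ, 0 ≤ Θ i ω)
    (hpos : 0 < μ {ω | 0 < Θ 1 ω})
    (lam : ℕ → ℝ) (hlampos : ∀ i, 0 < lam i)
    (hbdd : IsBoundedUnder (· ≤ ·) atTop lam)
    (hgrow : Tendsto (fun d : ℕ =>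
        (1 / (Real.sqrt d * Real.log d)) * ∑ i ∈ Finset.Icc 1 d, lam i)
      atTop atTop) :
    ∀ᵐ ω ∂μ, Tendsto (fun d : ℕ =>
        (1 / (Real.sqrt d * Real.log d)) *
          ∑ i ∈ Finset.Icc 1 d, min (lam i * Θ i ω) (1/2))
      atTop atTop := by
  obtain ⟨M, hM, hlamM⟩ : ∃ M, 1 ≤ M ∧ ∀ i, lam i ≤ M := by
    obtain ⟨B, hB⟩ := hbdd.bddAbove_range
    exact ⟨max B 1, le_max_right _ _, fun i ↦ (hB ⟨i, rfl⟩).trans (le_max_left _ _)⟩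
  have hm : 0 < μ[fun ω ↦ min (Θ 1 ω) (1 / 2)] :=
    integral_min_const_pos (hmeas 1).aemeasurable (hnn 1) hpos (by norm_num)
  filter_upwards [ae_eventually_integral_mul_sum_sub_lt_sum_mul_min hmeas hindep hident hnn
    (zero_lt_one.trans_le hM) (by norm_num : (0 : ℝ) < 1 / 2) (fun i ↦ (hlampos i).le) hlamM,
    ae_all_iff.2 hnn] with ω hω hθ
  refine hgrow.atTop_of_const_mul_sub_le hm (zero_lt_one.trans_le hM) ?_ ?_
  · filter_upwards [eventually_gt_atTop 1] with d hd
    have hd : (1 : ℝ) < d := by exact_mod_cast hd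
    exact mul_pos (sqrt_pos.mpr (by linarith)) (log_pos hd)
  · filter_upwards [hω] with d hd
    refine hd.le.trans ?_
    rw [Finset.mul_sum]
    exact Finset.sum_le_sum fun i _ ↦
      mul_min_le_mul_min (hlampos i).le (hlamM i) hM (hθ i) (by norm_num)
end

section
/- Fix a, a' > 0 with a ≠ a'. Let (V_i)_{i≥1} be i.i.d. exponential random variables with rate 2 and define V_{a,i} = 2V_i/(2+ia), V_{a',i} = 2V_i/(2+ia'). Then almost surely Σ_{i=1}^d |V_{a,i} - V_{a',i}| = O(|a - a'|·log d) as d → ∞; more precisely, almost surely limsup_{d→∞} (1/log d)·Σ_{i=1}^d |V_{a,i} - V_{a',i}| ≤ |a-a'|/(a·a'). -/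
open MeasureTheory ProbabilityTheory Filter Real

/-!
Each term is `2 |a - a'| i V_i / ((2 + i a)(2 + i a')) ≤ (2 |a - a'| / (a a')) · V_i / i`. By the
strong law of large numbers the partial sums `S_n = V_1 + ⋯ + V_n` satisfy `S_n ≤ c n` eventually
for every `c > E V_1 = 1/2`, and Abel summation turns this into `∑_{i ≤ d} V_i / i ≤ c log d + O(1)`.
-/

open Finset
open scoped Topology

theorem sum_range_succ_eq_sum_Icc_one {M : Type*} [AddCommMonoid M] (f : ℕ → M) (n : ℕ) :
    ∑ i ∈ range n, f (i + 1) = ∑ i ∈ Icc 1 n, f i := by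
  induction n with
  | zero => simp
  | succ n ih => rw [sum_range_succ, ih, sum_Icc_succ_top (by omega)]

section ExponentialRV

variable {Ω : Type*} [MeasurableSpace Ω] {μ : Measure Ω} {r : ℝ} {X : Ω → ℝ}

theorem IsExpRV.measure_gt_zero (h : IsExpRV μ r X) : μ {ω | X ω > 0} = 1 := by
  simpa using h.2 0 le_rfl

variable [IsProbabilityMeasure μ]

theorem IsExpRV.measure_gt (h : IsExpRV μ r X) (t : ℝ) :
    μ {ω | X ω > t} = ENNReal.ofReal (exp (-(r * max t 0))) := by
  rcases le_total 0 t with ht | ht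
  · rw [max_eq_left ht, h.2 t ht]
  · rw [max_eq_right ht, mul_zero, neg_zero, exp_zero, ENNReal.ofReal_one]
    exact le_antisymm prob_le_one
      (h.measure_gt_zero ▸ measure_mono fun ω (hω : X ω > 0) => ht.trans_lt hω)

theorem IsExpRV.ae_pos_s13 (h : IsExpRV μ r X) : ∀ᵐ ω ∂μ, 0 < X ω :=
  (ae_iff_measure_eq (h.1 measurableSet_Ioi).nullMeasurableSet).2 <| by
    rw [measure_univ]; exact h.measure_gt_zero

theorem IsExpRV.measure_le (h : IsExpRV μ r X) (t : ℝ) :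
    μ {ω | X ω ≤ t} = 1 - ENNReal.ofReal (exp (-(r * max t 0))) := by
  simp_rw [← not_lt, ← h.measure_gt t]
  exact prob_compl_eq_one_sub (h.1 measurableSet_Ioi)

theorem IsExpRV.identDistrib {Ω' : Type*} [MeasurableSpace Ω'] {ν : Measure Ω'}
    [IsProbabilityMeasure ν] {Y : Ω' → ℝ} (hX : IsExpRV μ r X) (hY : IsExpRV ν r Y) :
    IdentDistrib X Y μ ν := by
  refine ⟨hX.1.aemeasurable, hY.1.aemeasurable, ?_⟩
  have := Measure.isProbabilityMeasure_map (μ := μ) hX.1.aemeasurable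
  refine Measure.ext_of_Iic _ _ fun t => ?_
  rw [Measure.map_apply hX.1 measurableSet_Iic, Measure.map_apply hY.1 measurableSet_Iic]
  exact (hX.measure_le t).trans (hY.measure_le t).symm

theorem IsExpRV.lintegral_eq (hr : 0 < r) (h : IsExpRV μ r X) :
    ∫⁻ ω, ENNReal.ofReal (X ω) ∂μ = ENNReal.ofReal r⁻¹ := by
  have hexp : IntegrableOn (fun t => exp (-r * t)) (Set.Ioi 0) :=
    integrableOn_exp_mul_Ioi (neg_lt_zero.2 hr) 0
  rw [lintegral_eq_lintegral_meas_lt μ (h.ae_pos_s13.mono fun _ hω => hω.le) h.1.aemeasurable,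
    setLIntegral_congr_fun measurableSet_Ioi fun t ht => by
      rw [h.2 t (le_of_lt ht), ← neg_mul],
    ← ofReal_integral_eq_lintegral_ofReal hexp (ae_of_all _ fun t => (exp_pos _).le),
    integral_exp_mul_Ioi (neg_lt_zero.2 hr) 0]
  simp

theorem IsExpRV.integrable (hr : 0 < r) (h : IsExpRV μ r X) : Integrable X μ := by
  refine ⟨h.1.aestronglyMeasurable, ?_⟩
  rw [hasFiniteIntegral_iff_ofReal (h.ae_pos_s13.mono fun _ hω => hω.le), h.lintegral_eq hr]
  exact ENNReal.ofReal_lt_top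

theorem IsExpRV.integral_eq (hr : 0 < r) (h : IsExpRV μ r X) : ∫ ω, X ω ∂μ = r⁻¹ := by
  rw [integral_eq_lintegral_of_nonneg_ae (h.ae_pos_s13.mono fun _ hω => hω.le)
    h.1.aestronglyMeasurable, h.lintegral_eq hr, ENNReal.toReal_ofReal (by positivity)]

theorem ae_tendsto_average_of_iIndepFun_isExpRV (hr : 0 < r) {V : ℕ → Ω → ℝ}
    (hindep : iIndepFun V μ) (hexp : ∀ i, IsExpRV μ r (V i)) :
    ∀ᵐ ω ∂μ, Tendsto (fun n : ℕ => (∑ i ∈ Icc 1 n, V i ω) / n) atTop (𝓝 r⁻¹) := by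
  have hslln := strong_law_ae_real (μ := μ) (fun n => V (n + 1)) ((hexp 1).integrable hr)
    (fun i j hij => hindep.indepFun (by simpa using hij))
    (fun i => (hexp (i + 1)).identDistrib (hexp 1))
  filter_upwards [hslln] with ω hω
  simpa only [sum_range_succ_eq_sum_Icc_one (fun i => V i ω), zero_add,
    (hexp 1).integral_eq hr] using hω

end ExponentialRV

theorem inv_natCast_add_one_le_log_sub_log {n : ℕ} (hn : 1 ≤ n) :
    ((n : ℝ) + 1)⁻¹ ≤ log (n + 1) - log n := by
  have hn' : (0 : ℝ) < n := by exact_mod_cast hn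
  have := one_sub_inv_le_log_of_pos (x := (n + 1) / n) (by positivity)
  rw [log_div (by positivity) hn'.ne', inv_div] at this
  convert this using 1
  field_simp
  ring

section HarmonicWeights

variable {v : ℕ → ℝ}

theorem sum_Icc_div_le_of_sum_Icc_le (hv : ∀ i, 0 ≤ v i) {c : ℝ} (hc : 0 ≤ c) {N : ℕ}
    (hN : 1 ≤ N) (hS : ∀ n, N ≤ n → ∑ i ∈ Icc 1 n, v i ≤ c * n) {d : ℕ} (hd : N ≤ d) :
    ∑ i ∈ Icc 1 d, v i / i ≤ ∑ i ∈ Icc 1 N, v i / i + c + c * log d := by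
  set S : ℕ → ℝ := fun n => ∑ i ∈ Icc 1 n, v i
  set T : ℕ → ℝ := fun n => ∑ i ∈ Icc 1 n, v i / i
  -- Abel summation: `T n - S n / n` grows by `S n / (n (n + 1)) ≤ c / (n + 1)` per step.
  have hstep : ∀ n, N ≤ n →
      T (n + 1) - S (n + 1) / (n + 1 : ℕ) ≤ T n - S n / n + c * (log (n + 1) - log n) := by
    intro n hn
    have hn0 : (0 : ℝ) < n := by exact_mod_cast hN.trans hn
    have hT : T (n + 1) = T n + v (n + 1) / (n + 1 : ℕ) := sum_Icc_succ_top (by omega) _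
    have hS' : S (n + 1) = S n + v (n + 1) := sum_Icc_succ_top (by omega) _
    have hgap : S n / n - S n / (n + 1) ≤ c * ((n : ℝ) + 1)⁻¹ := by
      rw [div_sub_div _ _ hn0.ne' (by positivity), div_le_iff₀ (by positivity)]
      have := hS n hn
      field_simp
      nlinarith
    have hlog := mul_le_mul_of_nonneg_left (inv_natCast_add_one_le_log_sub_log (hN.trans hn)) hc
    rw [hT, hS']
    push_cast
    rw [add_div]
    linarith
  have hU : T d - S d / d ≤ T N - S N / N + c * (log d - log N) := by
    induction d, hd using Nat.le_induction with
    | base => simp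
    | succ n hn ih =>
      have := hstep n hn
      push_cast at this ⊢
      linarith
  have hSd : S d / d ≤ c := div_le_of_le_mul₀ (Nat.cast_nonneg _) hc (hS d hd)
  have hSN : 0 ≤ S N / N := div_nonneg (sum_nonneg fun i _ => hv i) (Nat.cast_nonneg _)
  have hlogN : 0 ≤ c * log N := mul_nonneg hc (log_natCast_nonneg N)
  linarith

theorem eventually_sum_Icc_div_le_mul_log (hv : ∀ i, 0 ≤ v i) {m : ℝ}
    (hm : Tendsto (fun n : ℕ => (∑ i ∈ Icc 1 n, v i) / n) atTop (𝓝 m)) {b : ℝ} (hb : m < b) :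
    ∀ᶠ d in atTop, ∑ i ∈ Icc 1 d, v i / i ≤ b * log d := by
  have hm0 : 0 ≤ m :=
    ge_of_tendsto' hm fun n => div_nonneg (sum_nonneg fun i _ => hv i) (Nat.cast_nonneg _)
  obtain ⟨c, hmc, hcb⟩ := exists_between hb
  obtain ⟨N, hN⟩ := eventually_atTop.1 <|
    (hm.eventually (gt_mem_nhds hmc)).and (eventually_ge_atTop 1)
  have hS : ∀ n, N ≤ n → ∑ i ∈ Icc 1 n, v i ≤ c * n := fun n hn => by
    have ⟨hlt, hn1⟩ := hN n hn
    rw [div_lt_iff₀ (by exact_mod_cast hn1)] at hlt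
    exact hlt.le
  have hlog : Tendsto (fun d : ℕ => log d) atTop atTop :=
    tendsto_log_atTop.comp tendsto_natCast_atTop_atTop
  filter_upwards [eventually_ge_atTop N,
    hlog.eventually_ge_atTop ((∑ i ∈ Icc 1 N, v i / i + c) / (b - c))] with d hd hlogd
  have := sum_Icc_div_le_of_sum_Icc_le hv (by linarith) (hN N le_rfl).2 hS hd
  rw [div_le_iff₀ (by linarith)] at hlogd
  linarith

end HarmonicWeights

theorem limsup_one_div_log_mul_le {f : ℕ → ℝ} (hf : ∀ d, 0 ≤ f d) {g : ℝ → ℝ} {m l : ℝ}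
    (hg : Tendsto g (𝓝[>] m) (𝓝 l)) (h : ∀ b, m < b → ∀ᶠ d in atTop, f d ≤ g b * log d) :
    limsup (fun d : ℕ => 1 / log d * f d) atTop ≤ l := by
  have hcobdd : IsCoboundedUnder (· ≤ ·) atTop fun d : ℕ => 1 / log d * f d :=
    isCoboundedUnder_le_of_le atTop fun d =>
      mul_nonneg (one_div_nonneg.2 (log_natCast_nonneg d)) (hf d)
  have hlog : ∀ᶠ d : ℕ in atTop, 0 < log d :=
    (tendsto_log_atTop.comp tendsto_natCast_atTop_atTop).eventually_gt_atTop 0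
  refine ge_of_tendsto hg (eventually_nhdsWithin_of_forall fun b hb => ?_)
  refine limsup_le_of_le hcobdd ((h b hb).and hlog |>.mono fun d ⟨hd, hpos⟩ => ?_)
  rwa [one_div_mul_eq_div, div_le_iff₀ hpos]

theorem abs_mul_div_sub_mul_div_le {a a' c t : ℝ} (ha : 0 < a) (ha' : 0 < a') (hc : 0 ≤ c)
    (ht : 0 < t) (x : ℝ) :
    |c * x / (c + t * a) - c * x / (c + t * a')| ≤ c * |a - a'| / (a * a') * (|x| / t) := by
  have hta : 0 < c + t * a := by positivity
  have hta' : 0 < c + t * a' := by positivity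
  have hsub : c * x / (c + t * a) - c * x / (c + t * a') =
      c * x * t * (a' - a) / ((c + t * a) * (c + t * a')) := by
    field_simp
    ring
  have hden : (t * a) * (t * a') ≤ (c + t * a) * (c + t * a') := by
    nlinarith [mul_pos ht ha, mul_pos ht ha']
  calc |c * x / (c + t * a) - c * x / (c + t * a')|
      = c * |x| * t * |a - a'| / ((c + t * a) * (c + t * a')) := by
        simp only [hsub, abs_div, abs_mul, abs_of_nonneg hc, abs_of_pos ht, abs_of_pos hta,
          abs_of_pos hta']
        rw [abs_sub_comm]
    _ ≤ c * |x| * t * |a - a'| / ((t * a) * (t * a')) := by gcongr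
    _ = c * |a - a'| / (a * a') * (|x| / t) := by field_simp

theorem coupled_stationary_gap_L1_distance_log_growth_general
    {Ω : Type*} [MeasurableSpace Ω] (μ : Measure Ω) [IsProbabilityMeasure μ]
    (a a' : ℝ) (ha : 0 < a) (ha' : 0 < a')
    (V : ℕ → Ω → ℝ)
    (hindep : iIndepFun V μ)
    (hexp : ∀ i, IsExpRV μ 2 (V i)) :
    ∀ᵐ ω ∂μ,
      (∃ c : ℝ, ∀ᶠ d : ℕ in atTop,
        (∑ i ∈ Finset.Icc 1 d,
            |2 * V i ω / (2 + i * a) - 2 * V i ω / (2 + i * a')|) ≤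
          c * |a - a'| * Real.log d) ∧
      limsup (fun d : ℕ =>
          (1 / Real.log d) *
            ∑ i ∈ Finset.Icc 1 d,
              |2 * V i ω / (2 + i * a) - 2 * V i ω / (2 + i * a')|)
        atTop ≤ |a - a'| / (a * a') := by
  filter_upwards [ae_tendsto_average_of_iIndepFun_isExpRV two_pos hindep hexp,
    ae_all_iff.2 fun i => (hexp i).ae_pos_s13] with ω hmean hpos
  set K := 2 * |a - a'| / (a * a')
  set D : ℕ → ℝ := fun d => ∑ i ∈ Icc 1 d, |2 * V i ω / (2 + i * a) - 2 * V i ω / (2 + i * a')|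
  have hD : ∀ b, 2⁻¹ < b → ∀ᶠ d in atTop, D d ≤ K * b * log d := fun b hb => by
    filter_upwards [eventually_sum_Icc_div_le_mul_log (fun i => (hpos i).le) hmean hb] with d hd
    calc D d ≤ ∑ i ∈ Icc 1 d, K * (V i ω / i) := sum_le_sum fun i hi => by
            simpa only [abs_of_pos (hpos i)] using abs_mul_div_sub_mul_div_le ha ha' zero_le_two
              (Nat.cast_pos.2 (mem_Icc.1 hi).1) (V i ω)
      _ = K * ∑ i ∈ Icc 1 d, V i ω / i := (mul_sum _ _ _).symm
      _ ≤ K * b * log d := by rw [mul_assoc]; gcongr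
  refine ⟨⟨2 / (a * a'), (hD 1 (by norm_num)).mono fun d hd => hd.trans_eq (by ring)⟩, ?_⟩
  have hK : Tendsto (fun b => K * b) (𝓝[>] 2⁻¹) (𝓝 (|a - a'| / (a * a'))) := by
    convert (continuous_const_mul K).continuousAt.tendsto.mono_left nhdsWithin_le_nhds using 2
    ring
  exact limsup_one_div_log_mul_le (fun d => sum_nonneg fun _ _ => abs_nonneg _) hK hD

theorem coupled_stationary_gap_L1_distance_log_growth
    {Ω : Type*} [MeasurableSpace Ω] (μ : Measure Ω) [IsProbabilityMeasure μ]
    (a a' : ℝ) (ha : 0 < a) (ha' : 0 < a') (hne : a ≠ a')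
    (V : ℕ → Ω → ℝ)
    (hindep : iIndepFun V μ)
    (hexp : ∀ i, IsExpRV μ 2 (V i)) :
    ∀ᵐ ω ∂μ,
      (∃ c : ℝ, ∀ᶠ d : ℕ in atTop,
        (∑ i ∈ Finset.Icc 1 d,
            |2 * V i ω / (2 + i * a) - 2 * V i ω / (2 + i * a')|) ≤
          c * |a - a'| * Real.log d) ∧
      limsup (fun d : ℕ =>
          (1 / Real.log d) *
            ∑ i ∈ Finset.Icc 1 d,
              |2 * V i ω / (2 + i * a) - 2 * V i ω / (2 + i * a')|)
        atTop ≤ |a - a'| / (a * a') :=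
  coupled_stationary_gap_L1_distance_log_growth_general μ a a' ha ha' V hindep hexp
end

section
/- Let (U_i)_{i≥1} be as in the previous example (U_i = i^{-2/3} off cubes, U_{n³} = n) and let (V_i)_{i≥1} be i.i.d. exponential with rate 2, independent of everything. Then almost surely there exist 0 < c₁ < c₂ with c₁·d^{1/3} ≤ Σ_{i=1}^d min(U_i, V_i) ≤ c₂·d^{1/3} for all large d; in particular liminf_{d→∞} (1/(√d·log d))·Σ_{i=1}^d min(U_i,V_i) = 0 almost surely. -/
open MeasureTheory ProbabilityTheory Filter Real

-- The deterministic gap sequence: `U i = i^(1/3)` (i.e. `n` when `i = n³`) on perfect cubes,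
-- and `U i = i^(-2/3)` otherwise.
open Classical in
noncomputable def cubeGap (i : ℕ) : ℝ :=
  if ∃ n : ℕ, i = n ^ 3 then (i : ℝ) ^ ((1:ℝ)/3) else (i : ℝ) ^ (-(2:ℝ)/3)

/-!
Write `Y i = min (cubeGap i) (V i)` and `S d = ∑_{i ≤ d} Y i`. Off the cubes `Y i ≤ i^(-2/3) ≤ 1`,
and an exponential variable exceeds `u ≤ 1` with probability at least `e^(-r)`, so
`E (Y i) ≍ i^(-2/3)` and `Var (Y i) ≤ i^(-4/3)`; on the `d^(1/3)` cubes below `d` the exponential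
tail bounds the first two moments of `Y i` by constants. Hence `E (S d) ≍ d^(1/3)` and
`Var (S d) = O(d^(1/3))`. Along `d = k^6` Chebyshev's inequality bounds the probability of a
deviation `ε k^2` by `O(k^(-2))`, so by Borel–Cantelli `S (k^6) ≍ k^2` eventually, almost surely;
since `S` is nondecreasing this interpolates to `S d ≍ d^(1/3)`. Finally `d^(1/3) = o(√d log d)`.
-/

lemma pow_three_rpow_one_third {x : ℝ} (hx : 0 ≤ x) : (x ^ 3) ^ ((1:ℝ)/3) = x := by
  simpa using pow_rpow_inv_natCast hx (n := 3) (by norm_num)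

lemma natCast_pow_six_rpow_one_third (k : ℕ) :
    ((k ^ 6 : ℕ) : ℝ) ^ ((1:ℝ)/3) = (k : ℝ) ^ 2 := by
  rw [Nat.cast_pow, show (k : ℝ) ^ 6 = ((k : ℝ) ^ 2) ^ 3 by ring]
  exact pow_three_rpow_one_third (by positivity)

lemma rpow_neg_two_thirds_eq_inv_sq {x : ℝ} (hx : 0 ≤ x) :
    x ^ (-(2:ℝ)/3) = ((x ^ ((1:ℝ)/3)) ^ 2)⁻¹ := by
  rw [← rpow_natCast, ← rpow_mul hx, ← rpow_neg hx]
  norm_num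

lemma sum_Icc_rpow_neg_le {s : ℝ} (hs0 : 0 ≤ s) (hs1 : s < 1) (d : ℕ) :
    ∑ i ∈ Finset.Icc 1 d, (i : ℝ) ^ (-s) ≤ (d : ℝ) ^ (1 - s) / (1 - s) := by
  rcases Nat.eq_zero_or_pos d with rfl | hd
  · simp [zero_rpow (sub_pos.2 hs1).ne']
  have hanti : AntitoneOn (fun x : ℝ => x ^ (-s)) (Set.Icc ((1 : ℕ) : ℝ) d) := fun x hx y _ hxy =>
    rpow_le_rpow_of_nonpos (by simp at hx; linarith [hx.1]) hxy (by linarith)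
  have hint := hanti.sum_le_integral_Ico (a := 1) (b := d) hd
  rw [integral_rpow (Or.inl (by linarith)),
    Finset.sum_Ico_add' (fun n : ℕ => (n : ℝ) ^ (-s))] at hint
  rw [← Finset.Ico_add_one_right_eq_Icc, Finset.sum_eq_sum_Ico_succ_bot (by omega)]
  simp only [Nat.cast_one, one_rpow] at hint ⊢
  have hs : 0 < 1 - s := by linarith
  rw [show -s + 1 = 1 - s by ring] at hint
  calc 1 + _ ≤ 1 + ((d : ℝ) ^ (1 - s) - 1) / (1 - s) := by gcongr
    _ ≤ (d : ℝ) ^ (1 - s) / (1 - s) := by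
      rw [add_div' _ _ _ hs.ne', div_le_div_iff_of_pos_right hs]
      linarith

open Classical in
lemma card_filter_cube_le (d : ℕ) :
    (((Finset.Icc 1 d).filter fun i => ∃ n : ℕ, i = n ^ 3).card : ℝ) ≤ (d : ℝ) ^ ((1:ℝ)/3) := by
  have hsub : (Finset.Icc 1 d).filter (fun i => ∃ n : ℕ, i = n ^ 3) ⊆
      (Finset.Icc 1 (Nat.nthRoot 3 d)).image (· ^ 3) := by
    intro i hi
    obtain ⟨hi, n, rfl⟩ := Finset.mem_filter.1 hi
    rw [Finset.mem_Icc] at hi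
    refine Finset.mem_image.2
      ⟨n, Finset.mem_Icc.2 ⟨?_, (Nat.le_nthRoot_iff three_ne_zero).2 hi.2⟩, rfl⟩
    exact Nat.pos_of_ne_zero (by rintro rfl; simp at hi)
  have hroot : ((Nat.nthRoot 3 d : ℕ) : ℝ) ≤ (d : ℝ) ^ ((1:ℝ)/3) := by
    rw [← pow_three_rpow_one_third (Nat.cast_nonneg (Nat.nthRoot 3 d))]
    gcongr
    exact_mod_cast Nat.pow_nthRoot_le (Or.inl three_ne_zero)
  calc _ ≤ (((Finset.Icc 1 (Nat.nthRoot 3 d)).image (· ^ 3)).card : ℝ) := by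
        exact_mod_cast Finset.card_le_card hsub
    _ ≤ Nat.nthRoot 3 d := by exact_mod_cast Finset.card_image_le.trans (by simp)
    _ ≤ _ := hroot

open Classical in
lemma sum_ite_cube_le {c : ℝ} (hc : 0 ≤ c) (d : ℕ) :
    ∑ i ∈ Finset.Icc 1 d, (if ∃ n : ℕ, i = n ^ 3 then c else 0) ≤ c * (d : ℝ) ^ ((1:ℝ)/3) := by
  rw [Finset.sum_ite, Finset.sum_const_zero, add_zero, Finset.sum_const, nsmul_eq_mul, mul_comm]
  exact mul_le_mul_of_nonneg_left (card_filter_cube_le d) hc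

lemma cubeGap_nonneg (i : ℕ) : 0 ≤ cubeGap i := by
  unfold cubeGap; split <;> positivity

lemma cubeGap_of_not_cube {i : ℕ} (h : ¬ ∃ n : ℕ, i = n ^ 3) :
    cubeGap i = (i : ℝ) ^ (-(2:ℝ)/3) :=
  if_neg h

lemma integral_rpow_le_of_meas_lt_le_exp {Ω : Type*} [MeasurableSpace Ω] {μ : Measure Ω}
    {f : Ω → ℝ} (hf : 0 ≤ᵐ[μ] f) (hfm : AEMeasurable f μ) {r p : ℝ} (hr : 0 < r) (hp : 0 < p)
    (htail : ∀ t, 0 < t → μ {ω | t < f ω} ≤ ENNReal.ofReal (exp (-(r * t)))) :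
    ∫ ω, f ω ^ p ∂μ ≤ Gamma (p + 1) / r ^ p := by
  have hint : IntegrableOn (fun t : ℝ => t ^ (p - 1) * exp (-(r * t))) (Set.Ioi 0) := by
    simpa using integrableOn_rpow_mul_exp_neg_mul_rpow (s := p - 1) (by linarith) one_pos hr
  have hgamma : p * ∫ t in Set.Ioi 0, t ^ (p - 1) * exp (-(r * t)) = Gamma (p + 1) / r ^ p := by
    rw [integral_rpow_mul_exp_neg_mul_Ioi hp hr, Gamma_add_one hp.ne', one_div, inv_rpow hr.le]
    ring
  have hlint : ∫⁻ ω, ENNReal.ofReal (f ω ^ p) ∂μ ≤ ENNReal.ofReal (Gamma (p + 1) / r ^ p) := by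
    rw [lintegral_rpow_eq_lintegral_meas_lt_mul μ hf hfm hp, ← hgamma, ENNReal.ofReal_mul hp.le,
      ofReal_integral_eq_lintegral_ofReal hint
        (ae_restrict_of_forall_mem measurableSet_Ioi fun t ht =>
          mul_nonneg (rpow_nonneg (le_of_lt ht) _) (exp_pos _).le)]
    gcongr _ * ?_
    refine setLIntegral_mono' measurableSet_Ioi fun t ht => ?_
    rw [ENNReal.ofReal_mul (rpow_nonneg (le_of_lt ht) _), mul_comm]
    gcongr
    exact htail t ht
  rw [integral_eq_lintegral_of_nonneg_ae (hf.mono fun ω h => rpow_nonneg h p)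
    (hfm.pow_const p).aestronglyMeasurable]
  exact ENNReal.toReal_le_of_le_ofReal (by positivity) hlint

namespace IsExpRV

variable {Ω : Type*} [MeasurableSpace Ω] {μ : Measure Ω} {r : ℝ} {X : Ω → ℝ}

lemma meas_lt_min_le (hX : IsExpRV μ r X) (u : ℝ) {t : ℝ} (ht : 0 ≤ t) :
    μ {ω | t < min u (X ω)} ≤ ENNReal.ofReal (exp (-(r * t))) :=
  calc μ {ω | t < min u (X ω)} ≤ μ {ω | X ω > t} :=
        measure_mono (Set.ofPred_subset_ofPred.2 fun _ h => (lt_min_iff.1 h).2)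
    _ = _ := hX.2 t ht

variable [IsProbabilityMeasure μ]

lemma ae_nonneg (hX : IsExpRV μ r X) : ∀ᵐ ω ∂μ, 0 ≤ X ω := by
  have h1 : μ {ω | 0 < X ω} = 1 := by simpa using hX.2 0 le_rfl
  have hpos : ∀ᵐ ω ∂μ, 0 < X ω :=
    mem_ae_iff.2 ((prob_compl_eq_zero_iff (measurableSet_lt measurable_const hX.1)).2 h1)
  exact hpos.mono fun _ h => h.le

lemma memLp_min (hX : IsExpRV μ r X) {u : ℝ} (hu : 0 ≤ u) (p : ENNReal) :
    MemLp (fun ω => min u (X ω)) p μ := by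
  refine MemLp.of_bound (measurable_const.min hX.1).aestronglyMeasurable u ?_
  filter_upwards [hX.ae_nonneg] with ω hω
  rw [Real.norm_of_nonneg (le_min hu hω)]
  exact min_le_left _ _

lemma integral_rpow_min_le (hX : IsExpRV μ r X) (hr : 0 < r) {u : ℝ} (hu : 0 ≤ u) {p : ℝ}
    (hp : 0 < p) : ∫ ω, min u (X ω) ^ p ∂μ ≤ Gamma (p + 1) / r ^ p := by
  refine integral_rpow_le_of_meas_lt_le_exp ?_ (measurable_const.min hX.1).aemeasurable hr hp
    fun t ht => hX.meas_lt_min_le u ht.le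
  filter_upwards [hX.ae_nonneg] with ω hω
  exact le_min hu hω

lemma mul_exp_le_integral_min (hX : IsExpRV μ r X) {u : ℝ} (hu : 0 ≤ u) :
    u * exp (-(r * u)) ≤ ∫ ω, min u (X ω) ∂μ := by
  have hs : MeasurableSet {ω | u < X ω} := measurableSet_lt measurable_const hX.1
  have hle : {ω | u < X ω}.indicator (fun _ => u) ≤ᵐ[μ] fun ω => min u (X ω) := by
    filter_upwards [hX.ae_nonneg] with ω hω
    by_cases h : u < X ω
    · simp [h, h.le]
    · simp [h, hu, hω]
  calc u * exp (-(r * u)) = ∫ ω, {ω | u < X ω}.indicator (fun _ => u) ω ∂μ := by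
        rw [integral_indicator_const _ hs, measureReal_def, hX.2 u hu,
          ENNReal.toReal_ofReal (exp_pos _).le, smul_eq_mul, mul_comm]
    _ ≤ ∫ ω, min u (X ω) ∂μ :=
        integral_mono_ae ((integrable_const u).indicator hs)
          ((hX.memLp_min hu 1).integrable le_rfl) hle

open Classical in
lemma integral_min_cubeGap_le (hX : IsExpRV μ r X) (hr : 0 < r) (i : ℕ) :
    ∫ ω, min (cubeGap i) (X ω) ∂μ ≤
      (i : ℝ) ^ (-(2:ℝ)/3) + if ∃ n : ℕ, i = n ^ 3 then 1 / r else 0 := by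
  by_cases h : ∃ n : ℕ, i = n ^ 3
  · have hmean := hX.integral_rpow_min_le hr (cubeGap_nonneg i) one_pos
    simp only [rpow_one, one_add_one_eq_two, Gamma_two] at hmean
    rw [if_pos h]
    linarith [rpow_nonneg (Nat.cast_nonneg i) (-(2:ℝ)/3)]
  · rw [if_neg h, add_zero, ← cubeGap_of_not_cube h]
    exact (integral_mono ((hX.memLp_min (cubeGap_nonneg i) 1).integrable le_rfl)
      (integrable_const _) fun ω => min_le_left _ _).trans_eq (by simp)

open Classical in
lemma integral_sq_min_cubeGap_le (hX : IsExpRV μ r X) (hr : 0 < r) (i : ℕ) :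
    ∫ ω, min (cubeGap i) (X ω) ^ 2 ∂μ ≤
      (i : ℝ) ^ (-(4:ℝ)/3) + if ∃ n : ℕ, i = n ^ 3 then 2 / r ^ 2 else 0 := by
  by_cases h : ∃ n : ℕ, i = n ^ 3
  · have hsq := hX.integral_rpow_min_le hr (cubeGap_nonneg i) two_pos
    have hG : Gamma (2 + 1) = 2 := by simpa using Gamma_nat_eq_factorial 2
    simp only [rpow_two, hG] at hsq
    rw [if_pos h]
    linarith [rpow_nonneg (Nat.cast_nonneg i) (-(4:ℝ)/3)]
  · have hu : cubeGap i ^ 2 = (i : ℝ) ^ (-(4:ℝ)/3) := by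
      rw [cubeGap_of_not_cube h, ← rpow_natCast, ← rpow_mul (Nat.cast_nonneg i)]
      norm_num
    rw [if_neg h, add_zero, ← hu]
    refine (integral_mono_ae ((hX.memLp_min (cubeGap_nonneg i) 2).integrable_sq)
      (integrable_const (cubeGap i ^ 2)) ?_).trans_eq (by simp)
    filter_upwards [hX.ae_nonneg] with ω hω
    exact pow_le_pow_left₀ (le_min (cubeGap_nonneg i) hω) (min_le_left _ _) 2

-- Summed over `i ∈ [1, d]` the left-hand side is `c * (d - #cubes)`, with `c = e^(-r) d^(-2/3)`.
open Classical in
lemma le_integral_min_cubeGap (hX : IsExpRV μ r X) (hr : 0 < r) {d i : ℕ}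
    (hi : i ∈ Finset.Icc 1 d) :
    exp (-r) * (d : ℝ) ^ (-(2:ℝ)/3) -
        (if ∃ n : ℕ, i = n ^ 3 then exp (-r) * (d : ℝ) ^ (-(2:ℝ)/3) else 0) ≤
      ∫ ω, min (cubeGap i) (X ω) ∂μ := by
  by_cases h : ∃ n : ℕ, i = n ^ 3
  · rw [if_pos h, sub_self]
    exact integral_nonneg_of_ae
      (by filter_upwards [hX.ae_nonneg] with ω hω using le_min (cubeGap_nonneg i) hω)
  · rw [if_neg h, sub_zero]
    obtain ⟨hi1, hid⟩ := Finset.mem_Icc.1 hi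
    have hi1' : (1 : ℝ) ≤ i := by exact_mod_cast hi1
    have hu1 : cubeGap i ≤ 1 := by
      rw [cubeGap_of_not_cube h]; exact rpow_le_one_of_one_le_of_nonpos hi1' (by norm_num)
    have hdu : (d : ℝ) ^ (-(2:ℝ)/3) ≤ cubeGap i := by
      rw [cubeGap_of_not_cube h]
      exact rpow_le_rpow_of_nonpos (by linarith) (by exact_mod_cast hid) (by norm_num)
    calc exp (-r) * (d : ℝ) ^ (-(2:ℝ)/3) ≤ cubeGap i * exp (-(r * cubeGap i)) := by
          rw [mul_comm]
          exact mul_le_mul hdu (exp_le_exp.2 (by nlinarith)) (exp_pos _).le (cubeGap_nonneg i)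
      _ ≤ _ := hX.mul_exp_le_integral_min (cubeGap_nonneg i)

end IsExpRV

section PartialSums

variable {Ω : Type*} [MeasurableSpace Ω] {μ : Measure Ω} [IsProbabilityMeasure μ] {r : ℝ}
  {V : ℕ → Ω → ℝ}

lemma integral_sum_min_cubeGap_le (hV : ∀ i, IsExpRV μ r (V i)) (hr : 0 < r) (d : ℕ) :
    ∫ ω, ∑ i ∈ Finset.Icc 1 d, min (cubeGap i) (V i ω) ∂μ ≤
      (3 + 1 / r) * (d : ℝ) ^ ((1:ℝ)/3) := by
  classical
  rw [integral_finsetSum _ fun i _ => ((hV i).memLp_min (cubeGap_nonneg i) 1).integrable le_rfl]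
  have hnoncube : ∑ i ∈ Finset.Icc 1 d, (i : ℝ) ^ (-(2:ℝ)/3) ≤ 3 * (d : ℝ) ^ ((1:ℝ)/3) := by
    convert sum_Icc_rpow_neg_le (s := 2/3) (by norm_num) (by norm_num) d using 1
    · simp only [neg_div]
    · norm_num
      ring
  calc _ ≤ ∑ i ∈ Finset.Icc 1 d,
        ((i : ℝ) ^ (-(2:ℝ)/3) + if ∃ n : ℕ, i = n ^ 3 then 1 / r else 0) :=
        Finset.sum_le_sum fun i _ => (hV i).integral_min_cubeGap_le hr i
    _ ≤ 3 * (d : ℝ) ^ ((1:ℝ)/3) + 1 / r * (d : ℝ) ^ ((1:ℝ)/3) := by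
        rw [Finset.sum_add_distrib]
        exact add_le_add hnoncube (sum_ite_cube_le (by positivity) d)
    _ = _ := by ring

lemma le_integral_sum_min_cubeGap (hV : ∀ i, IsExpRV μ r (V i)) (hr : 0 < r) {d : ℕ}
    (hd : 8 ≤ d) :
    exp (-r) / 2 * (d : ℝ) ^ ((1:ℝ)/3) ≤
      ∫ ω, ∑ i ∈ Finset.Icc 1 d, min (cubeGap i) (V i ω) ∂μ := by
  classical
  rw [integral_finsetSum _ fun i _ => ((hV i).memLp_min (cubeGap_nonneg i) 1).integrable le_rfl]
  set x := (d : ℝ) ^ ((1:ℝ)/3) with hx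
  have hx2 : 2 ≤ x := by
    rw [hx, ← pow_three_rpow_one_third zero_le_two]
    gcongr
    norm_num
    exact_mod_cast hd
  have hdx : (d : ℝ) = x ^ 3 := by
    rw [hx, one_div]
    simpa using (rpow_inv_natCast_pow (Nat.cast_nonneg d) (n := 3) (by norm_num)).symm
  set c := exp (-r) * (d : ℝ) ^ (-(2:ℝ)/3) with hc
  have hcx : c = exp (-r) * (x ^ 2)⁻¹ := by
    rw [hc, rpow_neg_two_thirds_eq_inv_sq (Nat.cast_nonneg d)]
  have hc0 : 0 ≤ c := by rw [hcx]; positivity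
  have hinv : x⁻¹ ≤ 2⁻¹ := inv_anti₀ two_pos hx2
  calc exp (-r) / 2 * x = exp (-r) * (x / 2) := by ring
    _ ≤ exp (-r) * (x - x⁻¹) := by gcongr; linarith
    _ = c * d - c * x := by
        rw [hcx, hdx]
        field_simp
    _ ≤ ∑ i ∈ Finset.Icc 1 d, (c - if ∃ n : ℕ, i = n ^ 3 then c else 0) := by
        simp only [Finset.sum_sub_distrib, Finset.sum_const, Nat.card_Icc, nsmul_eq_mul,
          Nat.add_sub_cancel]
        linarith [sum_ite_cube_le hc0 d]
    _ ≤ _ := Finset.sum_le_sum fun i hi => (hV i).le_integral_min_cubeGap hr hi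

lemma variance_sum_min_cubeGap_le (hindep : iIndepFun V μ) (hV : ∀ i, IsExpRV μ r (V i))
    (hr : 0 < r) (d : ℕ) :
    Var[fun ω => ∑ i ∈ Finset.Icc 1 d, min (cubeGap i) (V i ω); μ] ≤
      ((∑' n : ℕ, (n : ℝ) ^ (-(4:ℝ)/3)) + 2 / r ^ 2) * (d : ℝ) ^ ((1:ℝ)/3) := by
  classical
  have hY i : MemLp (fun ω => min (cubeGap i) (V i ω)) 2 μ :=
    (hV i).memLp_min (cubeGap_nonneg i) 2
  have hindY : iIndepFun (fun i ω => min (cubeGap i) (V i ω)) μ :=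
    hindep.comp _ fun i => measurable_const.min measurable_id
  rw [← Finset.sum_fn, IndepFun.variance_sum (fun i _ => hY i)
    fun i _ j _ hij => hindY.indepFun hij]
  rcases Nat.eq_zero_or_pos d with rfl | hd
  · simp
  have hx : 1 ≤ (d : ℝ) ^ ((1:ℝ)/3) := one_le_rpow (by exact_mod_cast hd) (by norm_num)
  have hsummable : Summable fun n : ℕ => (n : ℝ) ^ (-(4:ℝ)/3) :=
    summable_nat_rpow.2 (by norm_num)
  have htsum : 0 ≤ ∑' n : ℕ, (n : ℝ) ^ (-(4:ℝ)/3) := tsum_nonneg fun n => by positivity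
  calc _ ≤ ∑ i ∈ Finset.Icc 1 d,
        ((i : ℝ) ^ (-(4:ℝ)/3) + if ∃ n : ℕ, i = n ^ 3 then 2 / r ^ 2 else 0) :=
        Finset.sum_le_sum fun i _ => (variance_le_expectation_sq (hY i).1).trans
          ((hV i).integral_sq_min_cubeGap_le hr i)
    _ ≤ (∑' n : ℕ, (n : ℝ) ^ (-(4:ℝ)/3)) + 2 / r ^ 2 * (d : ℝ) ^ ((1:ℝ)/3) := by
        rw [Finset.sum_add_distrib]
        exact add_le_add (hsummable.sum_le_tsum _ fun n _ => by positivity)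
          (sum_ite_cube_le (by positivity) d)
    _ ≤ _ := by nlinarith

end PartialSums

section Deviations

variable {Ω : Type*} [MeasurableSpace Ω] {μ : Measure Ω} [IsFiniteMeasure μ]

lemma ae_eventually_abs_sub_integral_lt {X : ℕ → Ω → ℝ} (hX : ∀ k, MemLp (X k) 2 μ)
    {c : ℕ → ℝ} (hc : ∀ᶠ k in atTop, 0 < c k)
    (hsum : Summable fun k => Var[X k; μ] / c k ^ 2) :
    ∀ᵐ ω ∂μ, ∀ᶠ k in atTop, |X k ω - μ[X k]| < c k := by
  set s : ℕ → Set Ω := fun k => {ω | 0 < c k ∧ c k ≤ |X k ω - μ[X k]|}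
  have hs k : μ (s k) ≤ ENNReal.ofReal (Var[X k; μ] / c k ^ 2) := by
    by_cases hck : 0 < c k
    · simpa [s, hck] using meas_ge_le_variance_div_sq (hX k) hck
    · simp [s, hck]
  have hfin : ∑' k, μ (s k) ≠ ⊤ := by
    refine ne_top_of_le_ne_top ?_ (ENNReal.tsum_le_tsum hs)
    rw [← ENNReal.ofReal_tsum_of_nonneg
      (fun k => div_nonneg (variance_nonneg _ _) (sq_nonneg _)) hsum]
    exact ENNReal.ofReal_ne_top
  filter_upwards [ae_eventually_notMem hfin] with ω hω
  filter_upwards [hω, hc] with k hk hck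
  simpa [s, hck] using hk

lemma ae_eventually_abs_sub_integral_pow_six_lt {S : ℕ → Ω → ℝ} (hS : ∀ d, MemLp (S d) 2 μ)
    {C ε : ℝ} (hε : 0 < ε) (hvar : ∀ d, Var[S d; μ] ≤ C * (d : ℝ) ^ ((1:ℝ)/3)) :
    ∀ᵐ ω ∂μ, ∀ᶠ k : ℕ in atTop, |S (k ^ 6) ω - μ[S (k ^ 6)]| < ε * (k : ℝ) ^ 2 := by
  refine ae_eventually_abs_sub_integral_lt (fun k => hS _) ?_ ?_
  · filter_upwards [eventually_gt_atTop 0] with k hk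
    positivity
  · refine Summable.of_nonneg_of_le (fun k => div_nonneg (variance_nonneg _ _) (sq_nonneg _))
      (fun k => ?_) ((summable_nat_pow_inv.2 one_lt_two).mul_left (C / ε ^ 2))
    rcases Nat.eq_zero_or_pos k with rfl | hk
    · simp
    have hv := hvar (k ^ 6)
    rw [natCast_pow_six_rpow_one_third] at hv
    rw [div_le_iff₀ (by positivity)]
    calc Var[S (k ^ 6); μ] ≤ C * (k : ℝ) ^ 2 := hv
      _ = C / ε ^ 2 * ((k : ℝ) ^ 2)⁻¹ * (ε * (k : ℝ) ^ 2) ^ 2 := by field_simp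

end Deviations

lemma eventually_rpow_one_third_bounds_of_monotone {T : ℕ → ℝ} (hT : Monotone T) {a b : ℝ}
    (ha : 0 ≤ a) (hb : 0 ≤ b)
    (h : ∀ᶠ k : ℕ in atTop, a * (k : ℝ) ^ 2 ≤ T (k ^ 6) ∧ T (k ^ 6) ≤ b * (k : ℝ) ^ 2) :
    ∀ᶠ d : ℕ in atTop,
      a / 4 * (d : ℝ) ^ ((1:ℝ)/3) ≤ T d ∧ T d ≤ 4 * b * (d : ℝ) ^ ((1:ℝ)/3) := by
  obtain ⟨K, hK⟩ := eventually_atTop.1 h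
  filter_upwards [eventually_ge_atTop ((K + 1) ^ 6)] with d hd
  set k := Nat.nthRoot 6 d
  have hkd : k ^ 6 ≤ d := Nat.pow_nthRoot_le (Or.inl (by norm_num))
  have hdk : d < (k + 1) ^ 6 := Nat.lt_pow_nthRoot_add_one (by norm_num) d
  have hKk : K + 1 ≤ k := (Nat.le_nthRoot_iff (by norm_num)).2 hd
  have hlo : (k : ℝ) ^ 2 ≤ (d : ℝ) ^ ((1:ℝ)/3) := by
    rw [← natCast_pow_six_rpow_one_third]
    gcongr
  have hhi : (d : ℝ) ^ ((1:ℝ)/3) ≤ ((k + 1 : ℕ) : ℝ) ^ 2 := by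
    rw [← natCast_pow_six_rpow_one_third]
    gcongr
  have hk4 : ((k + 1 : ℕ) : ℝ) ^ 2 ≤ 4 * (k : ℝ) ^ 2 := by
    have : (1 : ℝ) ≤ k := by exact_mod_cast (by omega : 1 ≤ k)
    push_cast
    nlinarith
  constructor
  · calc a / 4 * (d : ℝ) ^ ((1:ℝ)/3) ≤ a / 4 * (4 * (k : ℝ) ^ 2) := by gcongr; linarith
      _ = a * (k : ℝ) ^ 2 := by ring
      _ ≤ T (k ^ 6) := (hK k (by omega)).1
      _ ≤ T d := hT hkd
  · calc T d ≤ T ((k + 1) ^ 6) := hT hdk.le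
      _ ≤ b * ((k + 1 : ℕ) : ℝ) ^ 2 := (hK (k + 1) (by omega)).2
      _ ≤ b * (4 * (k : ℝ) ^ 2) := by gcongr
      _ ≤ 4 * b * (d : ℝ) ^ ((1:ℝ)/3) := by nlinarith

lemma tendsto_one_div_sqrt_mul_log_mul_rpow_one_third :
    Tendsto (fun x : ℝ => 1 / (√x * log x) * x ^ ((1:ℝ)/3)) atTop (nhds 0) := by
  have h : Tendsto (fun x : ℝ => x ^ ((1:ℝ)/6) * log x) atTop atTop :=
    (tendsto_rpow_atTop (by norm_num)).atTop_mul_atTop₀ tendsto_log_atTop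
  refine h.inv_tendsto_atTop.congr' ?_
  filter_upwards [eventually_gt_atTop 1] with x hx
  have hx0 : 0 < x := by linarith
  have : 0 < x ^ ((1:ℝ)/3) := by positivity
  have : 0 < log x := log_pos hx
  rw [Pi.inv_apply, sqrt_eq_rpow, show (1:ℝ)/2 = 1/6 + 1/3 by norm_num, rpow_add hx0]
  field_simp

lemma liminf_one_div_sqrt_mul_log_mul_eq_zero {T : ℕ → ℝ}
    (h : T =O[atTop] fun d : ℕ => (d : ℝ) ^ ((1:ℝ)/3)) :
    liminf (fun d : ℕ => 1 / (√d * log d) * T d) atTop = 0 :=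
  ((Asymptotics.isBigO_refl _ _).mul h |>.trans_tendsto
    (tendsto_one_div_sqrt_mul_log_mul_rpow_one_third.comp tendsto_natCast_atTop_atTop)).liminf_eq

lemma ae_eventually_sum_min_cubeGap_pow_six_bounds {Ω : Type*} [MeasurableSpace Ω]
    {μ : Measure Ω} [IsProbabilityMeasure μ] {r : ℝ} {V : ℕ → Ω → ℝ} (hindep : iIndepFun V μ)
    (hV : ∀ i, IsExpRV μ r (V i)) (hr : 0 < r) :
    ∀ᵐ ω ∂μ, ∀ᶠ k : ℕ in atTop,
      exp (-r) / 4 * (k : ℝ) ^ 2 ≤ ∑ i ∈ Finset.Icc 1 (k ^ 6), min (cubeGap i) (V i ω) ∧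
      ∑ i ∈ Finset.Icc 1 (k ^ 6), min (cubeGap i) (V i ω) ≤
        (3 + 1 / r + exp (-r) / 4) * (k : ℝ) ^ 2 := by
  have hdev := ae_eventually_abs_sub_integral_pow_six_lt (μ := μ)
    (S := fun d ω => ∑ i ∈ Finset.Icc 1 d, min (cubeGap i) (V i ω))
    (fun d => memLp_finsetSum _ fun i _ => (hV i).memLp_min (cubeGap_nonneg i) 2)
    (by positivity : 0 < exp (-r) / 4) (variance_sum_min_cubeGap_le hindep hV hr)
  filter_upwards [hdev] with ω hω
  filter_upwards [hω, eventually_ge_atTop 2] with k hk hk2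
  have hlo := le_integral_sum_min_cubeGap hV hr
    (le_trans (by norm_num) (Nat.pow_le_pow_left hk2 6))
  have hhi := integral_sum_min_cubeGap_le hV hr (k ^ 6)
  rw [natCast_pow_six_rpow_one_third] at hlo hhi
  rw [abs_lt] at hk
  constructor <;> linarith [hk.1, hk.2]

theorem cubeGap_min_exponential_sums_asymptotics
    {Ω : Type*} [MeasurableSpace Ω] (μ : Measure Ω) [IsProbabilityMeasure μ]
    (V : ℕ → Ω → ℝ)
    (hindep : iIndepFun V μ)
    (hexp : ∀ i, IsExpRV μ 2 (V i)) :
    ∀ᵐ ω ∂μ,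
      (∃ c₁ c₂ : ℝ, 0 < c₁ ∧ c₁ < c₂ ∧ ∀ᶠ d : ℕ in atTop,
        c₁ * (d : ℝ) ^ ((1:ℝ)/3) ≤ ∑ i ∈ Finset.Icc 1 d, min (cubeGap i) (V i ω) ∧
        (∑ i ∈ Finset.Icc 1 d, min (cubeGap i) (V i ω)) ≤ c₂ * (d : ℝ) ^ ((1:ℝ)/3)) ∧
      liminf (fun d : ℕ =>
          (1 / (Real.sqrt d * Real.log d)) *
            ∑ i ∈ Finset.Icc 1 d, min (cubeGap i) (V i ω))
        atTop = 0 := by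
  filter_upwards [ae_eventually_sum_min_cubeGap_pow_six_bounds hindep hexp two_pos,
    ae_all_iff.2 fun i => (hexp i).ae_nonneg] with ω hω hV
  have hmono : Monotone fun d => ∑ i ∈ Finset.Icc 1 d, min (cubeGap i) (V i ω) :=
    fun d d' hdd' => Finset.sum_le_sum_of_subset_of_nonneg (Finset.Icc_subset_Icc_right hdd')
      fun i _ _ => le_min (cubeGap_nonneg i) (hV i)
  have hbounds := eventually_rpow_one_third_bounds_of_monotone hmono (by positivity)
    (by positivity) hω
  refine ⟨⟨_, _, by positivity, by linarith [exp_pos (-2 : ℝ)], hbounds⟩,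
    liminf_one_div_sqrt_mul_log_mul_eq_zero
      (Asymptotics.IsBigO.of_bound (4 * (3 + 1 / 2 + exp (-2) / 4)) ?_)⟩
  filter_upwards [hbounds] with d hd
  rw [norm_of_nonneg (le_trans (by positivity) hd.1), norm_of_nonneg (by positivity)]
  exact hd.2
end
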